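/- Let h : ℝ → ℝ be a decreasing, nonnegative, right-continuous function (when viewed as η ↦ h(-η) increasing in η) with lim_{x→∞} h(x) = 0, let H(r) = ∫₀^r h(x) dx, and let H₂ be the measure on ℝ with H₂((-∞,t]) = h(-t). Then for every x₂ ∈ ℝ, ∫_{(-x₂, 0]} η dH₂(η) - ∫_{(0,-x₂]} η dH₂(η) (i.e. the signed integral ∫ (1{η ≤ -x₂} − 1{η ≤ 0}) η dH₂(η) with sign conventions for x₂ of either sign) equals x₂ h(x₂) − H(x₂). -/

import Mathlib

open MeasureTheory Set Filter

/-!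
Stieltjes integration by parts for `F t = h (-t) = H₂ (Iic t)`: by the layer-cake formula,
`∫_{(a,b]} (η - a) dμ = ∫_0^{b-a} μ (a+t, b] dt = ∫_a^b (F b - F s) ds`, hence
`∫_{(a,b]} η dμ = b F b - a F a - ∫_a^b F`. With `a = -x₂`, `b = 0`, the substitution `s ↦ -s`
turns `∫_{-x₂}^0 F` into `H x₂`.
-/

namespace MeasureTheory.Measure

variable {μ : Measure ℝ} {F : ℝ → ℝ}

theorem monotone_of_measure_Iic_eq_ofReal (hF : ∀ t, 0 ≤ F t)
    (hμ : ∀ t, μ (Iic t) = ENNReal.ofReal (F t)) : Monotone F := fun a b hab => by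
  simpa [hμ, ENNReal.ofReal_le_ofReal_iff (hF b)] using
    measure_mono (μ := μ) (Iic_subset_Iic.2 hab)

theorem measure_Ioc_ne_top_of_measure_Iic_eq_ofReal
    (hμ : ∀ t, μ (Iic t) = ENNReal.ofReal (F t)) (a b : ℝ) : μ (Ioc a b) ≠ ⊤ :=
  ne_top_of_le_ne_top (by simp [hμ]) (measure_mono Ioc_subset_Iic_self)

theorem measureReal_Ioc_of_measure_Iic_eq_ofReal (hF : ∀ t, 0 ≤ F t)
    (hμ : ∀ t, μ (Iic t) = ENNReal.ofReal (F t)) {a b : ℝ} (hab : a ≤ b) :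
    μ.real (Ioc a b) = F b - F a := by
  rw [measureReal_def, ← Iic_sdiff_Iic, measure_sdiff (Iic_subset_Iic.2 hab) nullMeasurableSet_Iic
    (by simp [hμ]), hμ, hμ, ← ENNReal.ofReal_sub _ (hF a),
    ENNReal.toReal_ofReal (sub_nonneg.2 (monotone_of_measure_Iic_eq_ofReal hF hμ hab))]

theorem integrableOn_Ioc_id_of_measure_Iic_eq_ofReal
    (hμ : ∀ t, μ (Iic t) = ENNReal.ofReal (F t)) (a b : ℝ) :
    IntegrableOn (fun η => η) (Ioc a b) μ := by
  refine integrableOn_of_bounded (M := max |a| |b|)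
    (measure_Ioc_ne_top_of_measure_Iic_eq_ofReal hμ a b) aestronglyMeasurable_id ?_
  filter_upwards [ae_restrict_mem measurableSet_Ioc] with η hη
  exact abs_le_max_abs_abs hη.1.le hη.2

theorem measureReal_restrict_Ioc_lt_sub_left (hF : ∀ t, 0 ≤ F t)
    (hμ : ∀ t, μ (Iic t) = ENNReal.ofReal (F t)) {a b t : ℝ} (ht : 0 < t) :
    (μ.restrict (Ioc a b)).real {η | t < η - a} =
      (Ioc 0 (b - a)).indicator (fun t => F b - F (a + t)) t := by
  have hset : {η | t < η - a} ∩ Ioc a b = Ioc (a + t) b := by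
    ext η
    simp only [mem_inter_iff, mem_Ioc, mem_ofPred_eq]
    constructor
    · rintro ⟨h, -, hb⟩; exact ⟨by linarith, hb⟩
    · rintro ⟨h, hb⟩; exact ⟨by linarith, by linarith, hb⟩
  rw [measureReal_restrict_apply' measurableSet_Ioc, hset]
  by_cases htb : t ≤ b - a
  · rw [indicator_of_mem (show t ∈ Ioc 0 (b - a) from ⟨ht, htb⟩),
      measureReal_Ioc_of_measure_Iic_eq_ofReal hF hμ (by linarith)]
  · rw [indicator_of_notMem (fun h => htb h.2), Ioc_eq_empty (by linarith), measureReal_empty]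

theorem setIntegral_Ioc_sub_left_of_measure_Iic_eq_ofReal (hF : ∀ t, 0 ≤ F t)
    (hμ : ∀ t, μ (Iic t) = ENNReal.ofReal (F t)) {a b : ℝ} (hab : a ≤ b) :
    ∫ η in Ioc a b, (η - a) ∂μ = ∫ s in a..b, (F b - F s) := by
  have hint : IntegrableOn (fun η => η - a) (Ioc a b) μ :=
    (integrableOn_Ioc_id_of_measure_Iic_eq_ofReal hμ a b).sub
      (integrableOn_const (measure_Ioc_ne_top_of_measure_Iic_eq_ofReal hμ a b))
  have hnonneg : 0 ≤ᵐ[μ.restrict (Ioc a b)] fun η => η - a := by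
    filter_upwards [ae_restrict_mem measurableSet_Ioc] with η hη
    exact sub_nonneg.2 hη.1.le
  rw [hint.integral_eq_integral_meas_lt hnonneg,
    setIntegral_congr_fun measurableSet_Ioi fun t ht =>
      measureReal_restrict_Ioc_lt_sub_left hF hμ ht,
    setIntegral_indicator measurableSet_Ioc, inter_eq_self_of_subset_right Ioc_subset_Ioi_self,
    ← intervalIntegral.integral_of_le (sub_nonneg.2 hab),
    intervalIntegral.integral_comp_add_left (fun s => F b - F s)]
  simp

theorem setIntegral_Ioc_id_of_measure_Iic_eq_ofReal (hF : ∀ t, 0 ≤ F t)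
    (hμ : ∀ t, μ (Iic t) = ENNReal.ofReal (F t)) {a b : ℝ} (hab : a ≤ b) :
    ∫ η in Ioc a b, η ∂μ = b * F b - a * F a - ∫ s in a..b, F s := by
  have hshift := setIntegral_Ioc_sub_left_of_measure_Iic_eq_ofReal hF hμ hab
  rw [integral_sub (integrableOn_Ioc_id_of_measure_Iic_eq_ofReal hμ a b)
      (integrableOn_const (measure_Ioc_ne_top_of_measure_Iic_eq_ofReal hμ a b)),
    setIntegral_const, measureReal_Ioc_of_measure_Iic_eq_ofReal hF hμ hab,
    intervalIntegral.integral_sub intervalIntegrable_const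
      (monotone_of_measure_Iic_eq_ofReal hF hμ).intervalIntegrable,
    intervalIntegral.integral_const, smul_eq_mul, smul_eq_mul] at hshift
  linarith

theorem setIntegral_Ioc_id_sub_setIntegral_Ioc_id_of_measure_Iic_eq_ofReal (hF : ∀ t, 0 ≤ F t)
    (hμ : ∀ t, μ (Iic t) = ENNReal.ofReal (F t)) (a b : ℝ) :
    ∫ η in Ioc a b, η ∂μ - ∫ η in Ioc b a, η ∂μ = b * F b - a * F a - ∫ s in a..b, F s := by
  rcases le_total a b with hab | hba
  · rw [Ioc_eq_empty_of_le hab, setIntegral_empty, sub_zero,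
      setIntegral_Ioc_id_of_measure_Iic_eq_ofReal hF hμ hab]
  · rw [Ioc_eq_empty_of_le hba, setIntegral_empty, zero_sub,
      setIntegral_Ioc_id_of_measure_Iic_eq_ofReal hF hμ hba, intervalIntegral.integral_symm a b]
    ring

end MeasureTheory.Measure

theorem stmt_1_general (h : ℝ → ℝ) (hnonneg : ∀ x, 0 ≤ h x)
    (H : ℝ → ℝ) (hH : ∀ r : ℝ, H r = ∫ x in (0:ℝ)..r, h x)
    (H2 : Measure ℝ) (hH2 : ∀ t : ℝ, H2 (Set.Iic t) = ENNReal.ofReal (h (-t))) :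
    ∀ x₂ : ℝ,
      (∫ η in Set.Ioc (-x₂) 0, η ∂H2) - (∫ η in Set.Ioc 0 (-x₂), η ∂H2)
        = x₂ * h x₂ - H x₂ := by
  intro x₂
  rw [Measure.setIntegral_Ioc_id_sub_setIntegral_Ioc_id_of_measure_Iic_eq_ofReal
      (fun t => hnonneg (-t)) hH2, intervalIntegral.integral_comp_neg (fun s => h s), hH]
  simp

theorem stmt_1 (h : ℝ → ℝ) (hanti : Antitone h) (hnonneg : ∀ x, 0 ≤ h x)
    (hlim : Tendsto h atTop (nhds 0))
    (hrc : ∀ x : ℝ, ContinuousWithinAt (fun η => h (-η)) (Set.Ici x) x)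
    (H : ℝ → ℝ) (hH : ∀ r : ℝ, H r = ∫ x in (0:ℝ)..r, h x)
    (H2 : Measure ℝ) (hH2 : ∀ t : ℝ, H2 (Set.Iic t) = ENNReal.ofReal (h (-t))) :
    ∀ x₂ : ℝ,
      (∫ η in Set.Ioc (-x₂) 0, η ∂H2) - (∫ η in Set.Ioc 0 (-x₂), η ∂H2)
        = x₂ * h x₂ - H x₂ :=
  stmt_1_general h hnonneg H hH H2 hH2
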